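/- arXiv:1204.1367 — 2 statements merged into one kernel-verified Lean document; each statement's English description precedes it below -/
import Mathlib

section
/- Let M be a t × t matrix over Z_m with rank(M) = r. Then there exists a set of at most r · log m columns of M that spans all the columns of M (i.e., every column of M is a Z_m-linear combination of columns in this set), where log denotes logarithm base 2. -/
/-- The rank of a square matrix over `ZMod m`: the smallest `r` such that `M = A * B`
with `A` a `t × r` matrix and `B` an `r × t` matrix. -/
noncomputable def mrank {m t : ℕ} (M : Matrix (Fin t) (Fin t) (ZMod m)) : ℕ :=
  sInf {r : ℕ | ∃ (A : Matrix (Fin t) (Fin r) (ZMod m)) (B : Matrix (Fin r) (Fin t) (ZMod m)),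
    M = A * B}

/-!
Add the columns of `M` greedily, keeping a column only when it is not yet in the span of the
columns kept so far. Each kept column enlarges that span to a finite group containing it with
index at least `2`, so `k` kept columns span at least `2 ^ k` vectors. On the other hand every
column of `M = A * B` lies in the column space of `A`, which has at most `m ^ r` elements.
Hence `2 ^ k ≤ m ^ r`, i.e. `k ≤ r · log₂ m`.
-/

open Submodule

theorem AddSubgroup.two_mul_card_le_of_lt {G : Type*} [AddGroup G] {H K : AddSubgroup G}
    [Finite K] (h : H < K) : 2 * Nat.card H ≤ Nat.card K := by
  obtain ⟨k, hk⟩ := AddSubgroup.card_dvd_of_le h.le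
  have hk0 : k ≠ 0 := by
    rintro rfl
    exact Nat.card_pos.ne' (by simpa using hk)
  have hk1 : k ≠ 1 := by
    rintro rfl
    exact h.ne (AddSubgroup.eq_of_le_of_card_ge h.le (by simp [hk]))
  rw [hk, mul_comm]
  exact Nat.mul_le_mul_left _ (by omega)

theorem Submodule.exists_subset_two_pow_card_le_card_span {R M ι : Type*} [Ring R]
    [AddCommGroup M] [Module R M] [Finite M] (v : ι → M) (I : Finset ι) :
    ∃ S ⊆ I, v '' I ⊆ span R (v '' S) ∧ 2 ^ S.card ≤ Nat.card (span R (v '' S)) := by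
  classical
  induction I using Finset.induction_on with
  | empty => exact ⟨∅, subset_rfl, by simp, by simp⟩
  | @insert i I _ ih =>
    obtain ⟨S, hSI, hIS, hcard⟩ := ih
    by_cases hmem : v i ∈ span R (v '' S)
    · refine ⟨S, hSI.trans (Finset.subset_insert i I), ?_, hcard⟩
      rw [Finset.coe_insert, Set.image_insert_eq]
      exact Set.insert_subset hmem hIS
    · have hiS : i ∉ S := fun h => hmem (subset_span (Set.mem_image_of_mem v h))
      have hlt : span R (v '' S) < span R (insert (v i) (v '' S)) :=
        (span_mono (Set.subset_insert _ _)).lt_of_not_ge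
          fun h => hmem (h (subset_span (Set.mem_insert _ _)))
      refine ⟨insert i S, Finset.insert_subset_insert i hSI, ?_, ?_⟩
      · rw [Finset.coe_insert, Set.image_insert_eq, Finset.coe_insert, Set.image_insert_eq]
        exact Set.insert_subset (subset_span (Set.mem_insert _ _)) (hIS.trans hlt.le)
      · rw [Finset.card_insert_of_notMem hiS, Finset.coe_insert, Set.image_insert_eq]
        have hdouble := AddSubgroup.two_mul_card_le_of_lt (toAddSubgroup_strictMono hlt)
        calc 2 ^ (S.card + 1) = 2 * 2 ^ S.card := pow_succ' _ _
          _ ≤ 2 * Nat.card (span R (v '' S)) := Nat.mul_le_mul_left _ hcard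
          _ ≤ Nat.card (span R (insert (v i) (v '' S))) := hdouble

theorem Matrix.card_span_range_col_mul_le {R l n p : Type*} [CommRing R] [Finite R]
    [Fintype n] [Fintype p] (A : Matrix l n R) (B : Matrix n p R) :
    Nat.card (span R (Set.range (A * B).col)) ≤ Nat.card R ^ Nat.card n := by
  rw [← Matrix.range_mulVecLin, Matrix.mulVecLin_mul, ← Nat.card_fun]
  have : Finite (LinearMap.range A.mulVecLin) :=
    Finite.of_surjective _ A.mulVecLin.surjective_rangeRestrict
  calc Nat.card (LinearMap.range (A.mulVecLin ∘ₗ B.mulVecLin))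
      ≤ Nat.card (LinearMap.range A.mulVecLin) :=
        Nat.card_le_card_of_injective _ (inclusion_injective (LinearMap.range_comp_le_range _ _))
    _ ≤ Nat.card (n → R) := Nat.card_le_card_of_surjective _ A.mulVecLin.surjective_rangeRestrict

theorem Real.natCast_le_mul_logb_of_two_pow_le {k r b : ℕ} (h : 2 ^ k ≤ b ^ r) :
    (k : ℝ) ≤ r * Real.logb 2 b := by
  have hreal : (2 : ℝ) ^ k ≤ (b : ℝ) ^ r := by exact_mod_cast h
  have := Real.logb_le_logb_of_le one_lt_two (by positivity) hreal
  rwa [Real.logb_pow, Real.logb_pow, Real.logb_self_eq_one one_lt_two, mul_one] at this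

theorem exists_eq_mul_mrank {m t : ℕ} (M : Matrix (Fin t) (Fin t) (ZMod m)) :
    ∃ (A : Matrix (Fin t) (Fin (mrank M)) (ZMod m)) (B : Matrix (Fin (mrank M)) (Fin t) (ZMod m)),
      M = A * B :=
  Nat.sInf_mem (s := {r | ∃ (A : Matrix (Fin t) (Fin r) (ZMod m))
      (B : Matrix (Fin r) (Fin t) (ZMod m)), M = A * B}) ⟨t, M, 1, (Matrix.mul_one M).symm⟩

/-- Claim 4.4: there are at most `rank(M) · log m` columns of `M` spanning all columns of `M`. -/
theorem exists_spanning_columns (m t : ℕ) (hm : 2 ≤ m) (M : Matrix (Fin t) (Fin t) (ZMod m)) :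
    ∃ S : Finset (Fin t), (S.card : ℝ) ≤ (mrank M : ℝ) * Real.logb 2 (m : ℝ) ∧
      ∀ j : Fin t, (fun i => M i j) ∈
        Submodule.span (ZMod m) ((fun j' => fun i => M i j') '' (S : Set (Fin t))) := by
  have : NeZero m := ⟨by omega⟩
  obtain ⟨A, B, hAB⟩ := exists_eq_mul_mrank M
  obtain ⟨S, -, hspan, hcard⟩ :=
    exists_subset_two_pow_card_le_card_span (R := ZMod m) M.col Finset.univ
  refine ⟨S, Real.natCast_le_mul_logb_of_two_pow_le ?_, fun j => hspan ⟨j, by simp, rfl⟩⟩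
  calc 2 ^ S.card ≤ Nat.card (span (ZMod m) (M.col '' S)) := hcard
    _ ≤ Nat.card (span (ZMod m) (Set.range M.col)) :=
      Nat.card_le_card_of_injective _
        (inclusion_injective (span_mono (Set.image_subset_range _ _)))
    _ ≤ m ^ mrank M := by
      simpa [hAB] using Matrix.card_span_range_col_mul_le A B
end

section
/- Let m ≥ 2 and let (U,V) be a matching vector family in Z_m^n. Then there exists a collision-free matching vector sub-family (U',V') ⊆ (U,V) of size at least |(U,V)| divided by (∏_{s | m, 1 < s < m} MV(s, n·log m))^2, where the product is over all divisors s of m strictly between 1 and m, and log denotes logarithm base 2. -/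
open Finset

/-- Inner product of two vectors in `(ZMod m)^n`. -/
def mvInner {m n : ℕ} (u v : Fin n → ZMod m) : ZMod m := ∑ k, u k * v k

/-- `(U, V)` is a matching vector family of size `t` in `(ZMod m)^n`. -/
def IsMVFamily (m n t : ℕ) (U V : Fin t → Fin n → ZMod m) : Prop :=
  (∀ i, mvInner (U i) (V i) = 0) ∧ ∀ i j : Fin t, i ≠ j → mvInner (U i) (V j) ≠ 0

/-- `MVmax m n` is the maximum size of a matching vector family in `(ZMod m)^n`. -/
noncomputable def MVmax (m n : ℕ) : ℕ :=
  sSup {t : ℕ | ∃ U V : Fin t → Fin n → ZMod m, IsMVFamily m n t U V}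

lemma mv_U_inj {m n t : ℕ} {U V : Fin t → Fin n → ZMod m} (h : IsMVFamily m n t U V) :
    Function.Injective U := by
  intro i j hij
  by_contra hne
  exact h.2 i j hne (hij ▸ (h.1 j))

lemma mv_card_le {m n t : ℕ} (hm : m ≠ 0) {U V : Fin t → Fin n → ZMod m}
    (h : IsMVFamily m n t U V) : t ≤ m ^ n := by
  haveI : NeZero m := ⟨hm⟩
  have := Fintype.card_le_of_injective U (mv_U_inj h)
  simpa [ZMod.card] using this

lemma le_MVmax {m n t : ℕ} (hm : m ≠ 0) {U V : Fin t → Fin n → ZMod m}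
    (h : IsMVFamily m n t U V) : t ≤ MVmax m n := by
  apply le_csSup
  · exact ⟨m ^ n, fun t' ⟨U', V', h'⟩ => mv_card_le hm h'⟩
  · exact ⟨U, V, h⟩

lemma one_le_MVmax {m n : ℕ} (hm : m ≠ 0) : 1 ≤ MVmax m n := by
  refine le_MVmax hm (U := fun _ => 0) (V := fun _ => 0) ⟨fun i => ?_, fun i j hij => absurd (Subsingleton.elim i j) hij⟩
  simp [mvInner]

lemma MVmax_mono_dim {m : ℕ} (hm : m ≠ 0) {d1 d2 : ℕ} (h : d1 ≤ d2) :
    MVmax m d1 ≤ MVmax m d2 := by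
  apply csSup_le
  · refine ⟨0, fun _ => 0, fun _ => 0, fun i => by simp [mvInner],
      fun i j hij => absurd (Subsingleton.elim i j) hij⟩
  rintro t ⟨U, V, hUV⟩
  set pad : (Fin d1 → ZMod m) → Fin d2 → ZMod m :=
    fun u k => if hk : (k : ℕ) < d1 then u ⟨k, hk⟩ else 0 with hpad
  have hinner : ∀ u v : Fin d1 → ZMod m, mvInner (pad u) (pad v) = mvInner u v := by
    intro u v
    set G : ℕ → ZMod m := fun i => if hi : i < d1 then u ⟨i, hi⟩ * v ⟨i, hi⟩ else 0 with hG
    have h1 : mvInner (pad u) (pad v) = ∑ i ∈ Finset.range d2, G i := by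
      rw [mvInner]
      rw [show (∑ k : Fin d2, pad u k * pad v k) = ∑ k : Fin d2, G (k : ℕ) from
        Finset.sum_congr rfl (fun k _ => by
          simp only [hpad, hG]
          by_cases h' : (k : ℕ) < d1 <;> simp [h'])]
      exact Fin.sum_univ_eq_sum_range G d2
    have h2 : mvInner u v = ∑ i ∈ Finset.range d1, G i := by
      rw [mvInner]
      rw [show (∑ k : Fin d1, u k * v k) = ∑ k : Fin d1, G (k : ℕ) from
        Finset.sum_congr rfl (fun k _ => by simp [hG, k.isLt])]
      exact Fin.sum_univ_eq_sum_range G d1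
    rw [h1, h2]
    exact (Finset.sum_subset (Finset.range_subset_range.2 h) (by
      intro x _ hx
      simp only [Finset.mem_range, not_lt] at hx
      simp [hG, Nat.not_lt.2 hx])).symm
  exact le_MVmax hm ⟨fun i => by rw [hinner]; exact hUV.1 i,
    fun i j hij => by rw [hinner]; exact hUV.2 i j hij⟩
lemma int_cast_zmod_eq_iff (s : ℕ) [NeZero s] (a b : ℤ) :
    ((a : ZMod s) = b) ↔ (s:ℤ) ∣ (a - b) := by
  constructor
  · intro h
    rw [← ZMod.intCast_zmod_eq_zero_iff_dvd]
    push_cast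
    rw [h]; ring
  · intro h
    have := (ZMod.intCast_zmod_eq_zero_iff_dvd _ _).2 h
    push_cast at this
    linear_combination this

lemma zmod_cast_eq_iff {m s : ℕ} [NeZero m] [NeZero s] (x y : ZMod m) :
    ((ZMod.cast x : ZMod s) = ZMod.cast y) ↔ (s:ℤ) ∣ ((x.val : ℤ) - (y.val : ℤ)) := by
  rw [ZMod.cast_eq_val, ZMod.cast_eq_val, ← int_cast_zmod_eq_iff]
  push_cast
  rfl

lemma inner_eq_zero_iff {m n : ℕ} [NeZero m] (u v : Fin n → ZMod m) :
    mvInner u v = 0 ↔ (m:ℤ) ∣ ∑ k, ((u k).val : ℤ) * ((v k).val : ℤ) := by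
  rw [← ZMod.intCast_zmod_eq_zero_iff_dvd]
  have : ((∑ k, ((u k).val : ℤ) * ((v k).val : ℤ) : ℤ) : ZMod m) = mvInner u v := by
    push_cast
    rw [mvInner]
    exact Finset.sum_congr rfl (fun k _ => by rw [ZMod.natCast_val, ZMod.natCast_val, ZMod.cast_id, ZMod.cast_id])
  rw [this]

lemma fiber_le {m n t : ℕ} (hm : 2 ≤ m) {U V : Fin t → Fin n → ZMod m}
    (hMV : IsMVFamily m n t U V) {s : ℕ} (hsd : s ∣ m) (hs1 : 1 < s) (hsm : s < m)
    (i : Fin t) :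
    (univ.filter (fun j => ∀ k, (ZMod.cast (U j k) : ZMod s) = (ZMod.cast (U i k) : ZMod s))).card
      ≤ MVmax (m / s) (n + 1) := by
  haveI : NeZero m := ⟨by omega⟩
  haveI : NeZero s := ⟨by omega⟩
  set q := m / s with hqdef
  have hq : m = s * q := (Nat.mul_div_cancel' hsd).symm
  have hq2 : 2 ≤ q := by
    rcases Nat.lt_or_ge q 2 with h | h
    · interval_cases q <;> omega
    · exact h
  haveI : NeZero q := ⟨by omega⟩
  set F := univ.filter (fun j => ∀ k, (ZMod.cast (U j k) : ZMod s) = (ZMod.cast (U i k) : ZMod s)) with hF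
  have hiF : i ∈ F := by simp [hF]
  set aI : Fin t → Fin n → ℤ := fun j k => ((U j k).val : ℤ) with haI
  set bI : Fin t → Fin n → ℤ := fun j k => ((V j k).val : ℤ) with hbI
  set A : Fin t → Fin t → ℤ := fun j1 j2 => ∑ k, aI j1 k * bI j2 k with hA
  have hL3 : ∀ j1 j2, (mvInner (U j1) (V j2) = 0 ↔ (m:ℤ) ∣ A j1 j2) :=
    fun j1 j2 => inner_eq_zero_iff _ _
  have hfib : ∀ j ∈ F, ∀ k, (s:ℤ) ∣ aI j k - aI i k := by
    intro j hj k
    rw [hF, Finset.mem_filter] at hj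
    exact (zmod_cast_eq_iff _ _).1 (hj.2 k)
  have hS1 : ∀ j1 ∈ F, ∀ j2 ∈ F, (s:ℤ) ∣ A j1 j2 := by
    intro j1 h1 j2 h2
    have hdiff : (s:ℤ) ∣ A j1 j2 - A j2 j2 := by
      rw [show A j1 j2 - A j2 j2 = ∑ k, (aI j1 k - aI j2 k) * bI j2 k by
        rw [hA]; rw [← Finset.sum_sub_distrib]; exact Finset.sum_congr rfl (fun k _ => by ring)]
      exact Finset.dvd_sum (fun k _ => Dvd.dvd.mul_right
        (by have h1' := hfib j1 h1 k; have h2' := hfib j2 h2 k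
            have : aI j1 k - aI j2 k = (aI j1 k - aI i k) - (aI j2 k - aI i k) := by ring
            rw [this]; exact dvd_sub h1' h2') _)
    have hjj : (s:ℤ) ∣ A j2 j2 :=
      dvd_trans (Int.natCast_dvd_natCast.2 hsd) ((hL3 j2 j2).1 (hMV.1 j2))
    have : A j1 j2 = (A j1 j2 - A j2 j2) + A j2 j2 := by ring
    rw [this]; exact dvd_add hdiff hjj
  set w : Fin t → Fin n → ℤ := fun j k => (aI j k - aI i k) / s with hwdef
  set c : Fin t → ℤ := fun j => A i j / s with hcdef
  have hw : ∀ j ∈ F, ∀ k, (s:ℤ) * w j k = aI j k - aI i k :=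
    fun j hj k => Int.mul_ediv_cancel' (hfib j hj k)
  have hc : ∀ j ∈ F, (s:ℤ) * c j = A i j := fun j hj => Int.mul_ediv_cancel' (hS1 i hiF j hj)
  set W : Fin t → Fin (n+1) → ZMod q := fun j => Fin.snoc (fun k => ((w j k : ℤ) : ZMod q)) 1 with hW
  set Y : Fin t → Fin (n+1) → ZMod q :=
    fun j => Fin.snoc (fun k => ((bI j k : ℤ) : ZMod q)) ((c j : ℤ) : ZMod q) with hY
  have key : ∀ j1 ∈ F, ∀ j2 ∈ F, (mvInner (W j1) (Y j2) = 0 ↔ mvInner (U j1) (V j2) = 0) := by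
    intro j1 h1 j2 h2
    have hE : mvInner (W j1) (Y j2) = (((∑ k, w j1 k * bI j2 k) + c j2 : ℤ) : ZMod q) := by
      rw [mvInner, Fin.sum_univ_castSucc]
      simp only [hW, hY, Fin.snoc_castSucc, Fin.snoc_last, one_mul]
      push_cast
      ring
    have hsE : (s:ℤ) * ((∑ k, w j1 k * bI j2 k) + c j2) = A j1 j2 := by
      rw [mul_add, hc j2 h2, Finset.mul_sum]
      have hterm : ∀ k ∈ (univ : Finset (Fin n)),
          (s:ℤ) * (w j1 k * bI j2 k) = (aI j1 k - aI i k) * bI j2 k := by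
        intro k _
        rw [← mul_assoc, hw j1 h1 k]
      rw [Finset.sum_congr rfl hterm]
      have : ∑ k, (aI j1 k - aI i k) * bI j2 k = A j1 j2 - A i j2 := by
        rw [hA, ← Finset.sum_sub_distrib]
        exact Finset.sum_congr rfl (fun k _ => by ring)
      rw [this]; ring
    rw [hE, ZMod.intCast_zmod_eq_zero_iff_dvd, hL3 j1 j2]
    rw [← hsE]
    constructor
    · intro h
      rw [hq]
      push_cast
      exact mul_dvd_mul_left _ h
    · intro h
      rw [hq] at h
      push_cast at h
      exact (mul_dvd_mul_iff_left (by exact_mod_cast (by omega : (s:ℤ) ≠ 0))).1 h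
  set f := F.card with hf
  set e : Fin f ↪o Fin t := F.orderEmbOfFin rfl with he
  have heF : ∀ x, e x ∈ F := fun x => F.orderEmbOfFin_mem rfl x
  have hfam : IsMVFamily q (n+1) f (fun x => W (e x)) (fun x => Y (e x)) := by
    constructor
    · intro x
      exact (key (e x) (heF x) (e x) (heF x)).2 (hMV.1 (e x))
    · intro x y hxy h0
      exact hMV.2 (e x) (e y) (fun hc => hxy (e.injective hc))
        ((key (e x) (heF x) (e y) (heF y)).1 h0)
  exact le_MVmax (by omega) hfam
lemma greedy_indep {t : ℕ} (R : Fin t → Fin t → Prop) [DecidableRel R]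
    (hsym : ∀ i j, R i j → R j i) (Δ : ℕ)
    (hdeg : ∀ i : Fin t, (univ.filter (fun j => j ≠ i ∧ R i j)).card ≤ Δ) :
    ∃ T : Finset (Fin t), (∀ i ∈ T, ∀ j ∈ T, i ≠ j → ¬ R i j) ∧ t ≤ (Δ + 1) * T.card := by
  classical
  have H : ∀ N (S : Finset (Fin t)), S.card ≤ N →
      ∃ T, T ⊆ S ∧ (∀ i ∈ T, ∀ j ∈ T, i ≠ j → ¬ R i j) ∧ S.card ≤ (Δ + 1) * T.card := by
    intro N
    induction N with
    | zero =>
      intro S hS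
      exact ⟨∅, Finset.empty_subset _, by simp, by omega⟩
    | succ N ih =>
      intro S hS
      rcases S.eq_empty_or_nonempty with rfl | hne
      · exact ⟨∅, Finset.Subset.refl _, by simp, by simp⟩
      obtain ⟨x, hx⟩ := hne
      set B := insert x (S.filter (fun j => j ≠ x ∧ R x j)) with hB
      set S' := S \ B with hS'
      have hxB : x ∈ B := Finset.mem_insert_self _ _
      have hS'sub : S' ⊆ S.erase x := by
        intro y hy
        rw [hS', Finset.mem_sdiff] at hy
        exact Finset.mem_erase.2 ⟨fun h => hy.2 (h ▸ hxB), hy.1⟩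
      have hS'card : S'.card ≤ N := by
        have h1 := Finset.card_le_card hS'sub
        have h2 := Finset.card_erase_of_mem hx
        have := Finset.card_pos.2 ⟨x, hx⟩
        omega
      obtain ⟨T', hT'sub, hT'indep, hT'card⟩ := ih S' hS'card
      have hT'S : T' ⊆ S := hT'sub.trans (Finset.sdiff_subset)
      have hxT' : x ∉ T' := fun h => (Finset.mem_sdiff.1 (hT'sub h)).2 hxB
      have hnRx : ∀ j ∈ T', ¬ R x j := by
        intro j hj
        have hjS' := hT'sub hj
        rw [hS', Finset.mem_sdiff] at hjS'
        intro hR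
        apply hjS'.2
        rw [hB]
        apply Finset.mem_insert_of_mem
        refine Finset.mem_filter.2 ⟨hjS'.1, fun h => ?_, hR⟩
        exact hjS'.2 (h ▸ hxB)
      refine ⟨insert x T', Finset.insert_subset hx hT'S, ?_, ?_⟩
      · intro i hi j hj hij
        rcases Finset.mem_insert.1 hi with rfl | hi' <;>
          rcases Finset.mem_insert.1 hj with rfl | hj'
        · exact absurd rfl hij
        · exact hnRx j hj'
        · exact fun hR => hnRx i hi' (hsym _ _ hR)
        · exact hT'indep i hi' j hj' hij
      · have hBcard : B.card ≤ Δ + 1 := by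
          rw [hB]
          have h1 := Finset.card_insert_le x (S.filter (fun j => j ≠ x ∧ R x j))
          have h2 : (S.filter (fun j => j ≠ x ∧ R x j)).card ≤ Δ := by
            refine le_trans (Finset.card_le_card ?_) (hdeg x)
            intro y hy
            rw [Finset.mem_filter] at hy ⊢
            exact ⟨Finset.mem_univ _, hy.2⟩
          omega
        have hcover : S ⊆ B ∪ S' := by
          intro y hy
          by_cases hyB : y ∈ B
          · exact Finset.mem_union_left _ hyB
          · exact Finset.mem_union_right _ (Finset.mem_sdiff.2 ⟨hy, hyB⟩)
        have h3 : S.card ≤ B.card + S'.card :=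
          le_trans (Finset.card_le_card hcover) (Finset.card_union_le _ _)
        rw [Finset.card_insert_of_notMem hxT']
        have := hT'card
        nlinarith
  obtain ⟨T, _, hind, hcard⟩ := H t univ (by simp)
  exact ⟨T, hind, by simpa using hcard⟩

lemma prod_superadd {D : Finset ℕ} {f : ℕ → ℕ} (hf : ∀ s ∈ D, 1 ≤ f s) :
    1 + ∑ s ∈ D, (f s - 1) ≤ ∏ s ∈ D, f s := by
  classical
  induction D using Finset.induction_on with
  | empty => simp
  | @insert a D' hnotmem ih =>
    rw [Finset.sum_insert hnotmem, Finset.prod_insert hnotmem]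
    have ha : 1 ≤ f a := hf a (Finset.mem_insert_self _ _)
    have hrest := ih (fun s hs => hf s (Finset.mem_insert_of_mem hs))
    obtain ⟨y, hy⟩ := Nat.exists_eq_add_of_le ha
    rw [hy]
    have hsub : 1 + y - 1 = y := by omega
    rw [hsub]
    have hP : 1 ≤ ∏ s ∈ D', f s := le_trans (by omega) hrest
    have hyP : y ≤ y * ∏ s ∈ D', f s := Nat.le_mul_of_pos_right y (by omega)
    have hexp : (1 + y) * ∏ s ∈ D', f s = (∏ s ∈ D', f s) + y * ∏ s ∈ D', f s := by ring
    omega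

lemma deg_le_prod_sq {D : Finset ℕ} {f : ℕ → ℕ} (hf : ∀ s ∈ D, 1 ≤ f s) :
    1 + ∑ s ∈ D, 2 * (f s - 1) ≤ (∏ s ∈ D, f s) ^ 2 := by
  have h1 : ∀ s ∈ D, 2 * (f s - 1) ≤ f s ^ 2 - 1 := by
    intro s hs
    have := hf s hs
    obtain ⟨y, hy⟩ := Nat.exists_eq_add_of_le this
    rw [hy]
    have hexp : (1 + y) ^ 2 = 1 + 2 * y + y * y := by ring
    omega
  have h2 : 1 + ∑ s ∈ D, 2 * (f s - 1) ≤ 1 + ∑ s ∈ D, (f s ^ 2 - 1) := by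
    have := Finset.sum_le_sum h1
    omega
  refine h2.trans ?_
  rw [← Finset.prod_pow]
  exact prod_superadd (fun s hs => Nat.one_le_pow _ _ (hf s hs))

lemma divisor_prod_reindex (m : ℕ) (hm : 1 ≤ m) (f : ℕ → ℕ) :
    ∏ s ∈ m.divisors.filter (fun s => 1 < s ∧ s < m), f (m / s)
      = ∏ s ∈ m.divisors.filter (fun s => 1 < s ∧ s < m), f s := by
  have hmem : ∀ s ∈ m.divisors.filter (fun s => 1 < s ∧ s < m),
      m / s ∈ m.divisors.filter (fun s => 1 < s ∧ s < m) := by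
    intro s hs
    rw [Finset.mem_filter, Nat.mem_divisors] at hs ⊢
    obtain ⟨⟨hdvd, hm0⟩, hs1, hsm⟩ := hs
    refine ⟨⟨Nat.div_dvd_of_dvd hdvd, hm0⟩, ?_, Nat.div_lt_self (by omega) hs1⟩
    rcases Nat.lt_or_ge (m / s) 2 with h | h
    · exfalso
      have hqs : s * (m / s) = m := Nat.mul_div_cancel' hdvd
      have hms : m ≤ s := by
        calc m = s * (m / s) := hqs.symm
        _ ≤ s * 1 := Nat.mul_le_mul_left s (by omega)
        _ = s := by ring
      omega
    · omega
  have hinv : ∀ s ∈ m.divisors.filter (fun s => 1 < s ∧ s < m), m / (m / s) = s := by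
    intro s hs
    rw [Finset.mem_filter, Nat.mem_divisors] at hs
    exact Nat.div_div_self hs.1.1 hs.1.2
  exact Finset.prod_nbij' (fun s => m / s) (fun s => m / s) hmem hmem hinv hinv
    (fun a _ => rfl)

lemma logdim_ge (m n : ℕ) (hm : 4 ≤ m) (hn : 1 ≤ n) :
    n + 1 ≤ ⌊(n : ℝ) * Real.logb 2 (m : ℝ)⌋₊ := by
  apply Nat.le_floor
  have h2 : Real.logb 2 4 = 2 := by
    rw [show (4:ℝ) = 2 ^ (2:ℕ) by norm_num, Real.logb_pow, Real.logb_self_eq_one] <;> norm_num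
  have hle : (2:ℝ) ≤ Real.logb 2 (m : ℝ) := by
    have h4 := Real.logb_le_logb_of_le (b := 2) one_lt_two (show (0:ℝ) < 4 by norm_num)
      (show (4:ℝ) ≤ (m:ℝ) by exact_mod_cast hm)
    rw [h2] at h4
    exact h4
  have hn' : (1:ℝ) ≤ (n:ℝ) := by exact_mod_cast hn
  push_cast
  nlinarith
lemma mv_V_inj {m n t : ℕ} {U V : Fin t → Fin n → ZMod m} (h : IsMVFamily m n t U V) :
    Function.Injective V := by
  intro i j hij
  by_contra hne
  exact h.2 j i (fun hc => hne hc.symm) (hij ▸ (h.1 j))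

lemma mvInner_comm {m n : ℕ} (u v : Fin n → ZMod m) : mvInner u v = mvInner v u :=
  Finset.sum_congr rfl (fun k _ => mul_comm _ _)

lemma mv_swap {m n t : ℕ} {U V : Fin t → Fin n → ZMod m} (h : IsMVFamily m n t U V) :
    IsMVFamily m n t V U := by
  refine ⟨fun i => by rw [mvInner_comm]; exact h.1 i, fun i j hij => ?_⟩
  rw [mvInner_comm]
  exact h.2 j i (Ne.symm hij)

/-- A matching vector family is collision free if for every divisor `s ≥ 2` of `m`, the
elements of `U` are pairwise distinct modulo `s`, and similarly for `V`. -/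
def CollisionFree (m n t : ℕ) (U V : Fin t → Fin n → ZMod m) : Prop :=
  ∀ s : ℕ, s ∣ m → 2 ≤ s →
    (∀ i j : Fin t, (∀ k, (ZMod.cast (U i k) : ZMod s) = (ZMod.cast (U j k) : ZMod s)) → i = j) ∧
    (∀ i j : Fin t, (∀ k, (ZMod.cast (V i k) : ZMod s) = (ZMod.cast (V j k) : ZMod s)) → i = j)

/-- Lemma 5.4: every MV family contains a large collision-free MV sub-family. -/
theorem exists_collision_free_subfamily (m n : ℕ) (hm : 2 ≤ m) (t : ℕ)
    (U V : Fin t → Fin n → ZMod m) (hMV : IsMVFamily m n t U V) :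
    ∃ (t' : ℕ) (g : Fin t' → Fin t), StrictMono g ∧
      CollisionFree m n t' (fun i => U (g i)) (fun i => V (g i)) ∧
      (t : ℝ) / ((∏ s ∈ m.divisors.filter (fun s => 1 < s ∧ s < m),
          (MVmax s ⌊(n : ℝ) * Real.logb 2 (m : ℝ)⌋₊ : ℝ)) ^ 2) ≤ (t' : ℝ) := by
  classical
  set D := m.divisors.filter (fun s => 1 < s ∧ s < m) with hD
  set N := ⌊(n : ℝ) * Real.logb 2 (m : ℝ)⌋₊ with hN
  set P : ℕ := ∏ s ∈ D, MVmax s N with hP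
  have hDmem : ∀ s ∈ D, s ∣ m ∧ 1 < s ∧ s < m := by
    intro s hs
    rw [hD, Finset.mem_filter, Nat.mem_divisors] at hs
    exact ⟨hs.1.1, hs.2⟩
  have hPone : 1 ≤ P := by
    rw [hP]
    exact Finset.one_le_prod' (fun s hs => one_le_MVmax (by have := (hDmem s hs).2.1; omega))
  have hQcast : (∏ s ∈ D, ((MVmax s N : ℕ) : ℝ)) = ((P : ℕ) : ℝ) := by
    rw [hP]; push_cast; rfl
  have hPpos : (0:ℝ) < ((P:ℕ):ℝ) ^ 2 := by
    have : (1:ℝ) ≤ ((P:ℕ):ℝ) := by exact_mod_cast hPone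
    positivity
  by_cases htriv : t ≤ 1
  · refine ⟨t, fun i => i, strictMono_id, ?_, ?_⟩
    · intro s hsd hs2
      constructor <;>
        exact fun i j _ => Fin.ext (by have := i.isLt; have := j.isLt; omega)
    · rw [hQcast]
      apply div_le_self (by positivity)
      have : (1:ℝ) ≤ ((P:ℕ):ℝ) := by exact_mod_cast hPone
      nlinarith
  push_neg at htriv
  have hn1 : 1 ≤ n := by
    by_contra hn0
    have hn0' : n = 0 := by omega
    have := mv_card_le (by omega : m ≠ 0) hMV
    rw [hn0'] at this
    simp at this
    omega
  set R : Fin t → Fin t → Prop := fun i j =>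
    ∃ s ∈ D, (∀ k, (ZMod.cast (U i k) : ZMod s) = (ZMod.cast (U j k) : ZMod s)) ∨
      (∀ k, (ZMod.cast (V i k) : ZMod s) = (ZMod.cast (V j k) : ZMod s)) with hR
  have hsym : ∀ i j, R i j → R j i := by
    rintro i j ⟨s, hs, h | h⟩
    · exact ⟨s, hs, Or.inl (fun k => (h k).symm)⟩
    · exact ⟨s, hs, Or.inr (fun k => (h k).symm)⟩
  set B : ℕ → ℕ := fun s => MVmax (m / s) N with hB
  have hm4 : ∀ s ∈ D, 4 ≤ m := by
    intro s hs
    obtain ⟨hdvd, hs1, hsm⟩ := hDmem s hs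
    obtain ⟨k, hk⟩ := hdvd
    have hk2 : 2 ≤ k := by
      by_contra hk2
      have : k = 0 ∨ k = 1 := by omega
      rcases this with h | h <;> rw [h] at hk <;> omega
    nlinarith
  have hfiber : ∀ s ∈ D, ∀ W : Fin t → Fin n → ZMod m, ∀ Z : Fin t → Fin n → ZMod m,
      IsMVFamily m n t W Z → ∀ i : Fin t,
      (univ.filter (fun j => j ≠ i ∧
        ∀ k, (ZMod.cast (W j k) : ZMod s) = (ZMod.cast (W i k) : ZMod s))).card ≤ B s - 1 := by
    intro s hs W Z hWZ i
    obtain ⟨hdvd, hs1, hsm⟩ := hDmem s hs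
    set Full := univ.filter (fun j => ∀ k,
      (ZMod.cast (W j k) : ZMod s) = (ZMod.cast (W i k) : ZMod s)) with hFull
    have hiFull : i ∈ Full := by simp [hFull]
    have hsubset : univ.filter (fun j => j ≠ i ∧
        ∀ k, (ZMod.cast (W j k) : ZMod s) = (ZMod.cast (W i k) : ZMod s)) ⊆ Full.erase i := by
      intro j hj
      rw [Finset.mem_filter] at hj
      exact Finset.mem_erase.2 ⟨hj.2.1, by simp [hFull, hj.2.2]⟩
    have hFullcard : Full.card ≤ B s := by
      refine le_trans (fiber_le hm hWZ hdvd hs1 hsm i) ?_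
      rw [hB]
      exact MVmax_mono_dim (by
          intro h0
          have := Nat.div_dvd_of_dvd hdvd
          rw [h0] at this
          have := Nat.eq_zero_of_zero_dvd this
          omega)
        (by rw [hN]; exact logdim_ge m n (hm4 s hs) hn1)
    calc (univ.filter (fun j => j ≠ i ∧
        ∀ k, (ZMod.cast (W j k) : ZMod s) = (ZMod.cast (W i k) : ZMod s))).card
        ≤ (Full.erase i).card := Finset.card_le_card hsubset
      _ = Full.card - 1 := Finset.card_erase_of_mem hiFull
      _ ≤ B s - 1 := by omega
  set Δ := ∑ s ∈ D, 2 * (B s - 1) with hΔ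
  have hdeg : ∀ i : Fin t, (univ.filter (fun j => j ≠ i ∧ R i j)).card ≤ Δ := by
    intro i
    have hsub : univ.filter (fun j => j ≠ i ∧ R i j) ⊆ D.biUnion (fun s =>
        (univ.filter (fun j => j ≠ i ∧
          ∀ k, (ZMod.cast (U j k) : ZMod s) = (ZMod.cast (U i k) : ZMod s))) ∪
        (univ.filter (fun j => j ≠ i ∧
          ∀ k, (ZMod.cast (V j k) : ZMod s) = (ZMod.cast (V i k) : ZMod s)))) := by
      intro j hj
      rw [Finset.mem_filter] at hj
      obtain ⟨-, hne, s, hs, hcase⟩ := hj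
      refine Finset.mem_biUnion.2 ⟨s, hs, ?_⟩
      rcases hcase with h | h
      · exact Finset.mem_union_left _
          (Finset.mem_filter.2 ⟨Finset.mem_univ _, hne, fun k => (h k).symm⟩)
      · exact Finset.mem_union_right _
          (Finset.mem_filter.2 ⟨Finset.mem_univ _, hne, fun k => (h k).symm⟩)
    refine le_trans (Finset.card_le_card hsub) (le_trans (Finset.card_biUnion_le) ?_)
    rw [hΔ]
    refine Finset.sum_le_sum (fun s hs => ?_)
    refine le_trans (Finset.card_union_le _ _) ?_
    have h1 := hfiber s hs U V hMV i
    have h2 := hfiber s hs V U (mv_swap hMV) i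
    omega
  obtain ⟨T, hTindep, hTcard⟩ := greedy_indep R hsym Δ hdeg
  have hTpos : 0 < T.card := by
    by_contra h0
    have : T.card = 0 := by omega
    rw [this] at hTcard
    omega
  set g : Fin T.card ↪o Fin t := T.orderEmbOfFin rfl with hg
  have hgT : ∀ x, g x ∈ T := fun x => T.orderEmbOfFin_mem rfl x
  refine ⟨T.card, g, g.strictMono, ?_, ?_⟩
  · intro s hsd hs2
    by_cases hsm : s = m
    · subst hsm
      constructor
      · intro i j h
        have hUU : U (g i) = U (g j) := funext (fun k => by
          have := h k
          rwa [ZMod.cast_id, ZMod.cast_id] at this)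
        exact g.injective (mv_U_inj hMV hUU)
      · intro i j h
        have hVV : V (g i) = V (g j) := funext (fun k => by
          have := h k
          rwa [ZMod.cast_id, ZMod.cast_id] at this)
        exact g.injective (mv_V_inj hMV hVV)
    · have hsD : s ∈ D := by
        rw [hD, Finset.mem_filter, Nat.mem_divisors]
        exact ⟨⟨hsd, by omega⟩, by omega,
          lt_of_le_of_ne (Nat.le_of_dvd (by omega) hsd) hsm⟩
      constructor
      · intro i j h
        by_contra hij
        have hgne : g i ≠ g j := fun hc => hij (g.injective hc)
        exact hTindep (g i) (hgT i) (g j) (hgT j) hgne ⟨s, hsD, Or.inl h⟩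
      · intro i j h
        by_contra hij
        have hgne : g i ≠ g j := fun hc => hij (g.injective hc)
        exact hTindep (g i) (hgT i) (g j) (hgT j) hgne ⟨s, hsD, Or.inr h⟩
  · have hB1 : ∀ s ∈ D, 1 ≤ B s := by
      intro s hs
      obtain ⟨hdvd, hs1, hsm⟩ := hDmem s hs
      refine one_le_MVmax (fun h0 => ?_)
      have := Nat.div_dvd_of_dvd hdvd
      rw [h0] at this
      have := Nat.eq_zero_of_zero_dvd this
      omega
    have h2 : Δ + 1 ≤ P ^ 2 := by
      have hds := deg_le_prod_sq hB1
      have hre : ∏ s ∈ D, B s = P := by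
        rw [hB, hP, hD]
        exact divisor_prod_reindex m (by omega) (fun s => MVmax s N)
      rw [hre] at hds
      omega
    have h3 : t ≤ P ^ 2 * T.card :=
      le_trans hTcard (Nat.mul_le_mul_right _ h2)
    rw [hQcast, div_le_iff₀ hPpos]
    have : (t:ℝ) ≤ ((P:ℕ):ℝ) ^ 2 * (T.card : ℝ) := by exact_mod_cast h3
    linarith
end
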